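/- arXiv:2003.07957 — 5 statements merged into one kernel-verified Lean document; each statement's English description precedes it below -/
import Mathlib

section
/- Let G be a comprehensive Gröbner basis of an ideal I of P and let p ∈ G. Then G \ {p} fails to be a comprehensive Gröbner basis of I (i.e. p is essential w.r.t. G) if and only if there exists a parameter assignment v : U → L such that σ_v(p) ≠ 0 and for every q ∈ G \ {p} it is NOT the case that σ_v(q) ≠ 0 and m.degree(σ_v(q)) ≤ m.degree(σ_v(p)); in other words, no leading monomial of a specialized polynomial from G \ {p} divides the leading monomial of σ_v(p). -/
open MvPolynomial

/-- The leading monomial (`m.degree`) of a multivariate polynomial w.r.t. a monomial order. -/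
noncomputable def mdeg {σ R : Type*} [CommSemiring R] (m : MonomialOrder σ)
    (p : MvPolynomial σ R) : σ →₀ ℕ :=
  m.toSyn.symm (p.support.sup fun s => m.toSyn s)

/-- `H` is a Gröbner basis of the ideal `J`. -/
def IsGroebnerBasis {σ F : Type*} [Field F] (m : MonomialOrder σ)
    (J : Ideal (MvPolynomial σ F)) (H : Set (MvPolynomial σ F)) : Prop :=
  H ⊆ (J : Set (MvPolynomial σ F)) ∧
    ∀ p ∈ J, p ≠ 0 → ∃ h ∈ H, h ≠ 0 ∧ mdeg m h ≤ mdeg m p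

/-- Specialization of the parameters at `v : U → L`. -/
noncomputable def paramSpec {K L U X : Type*} [CommSemiring K] [CommSemiring L]
    [Algebra K L] (v : U → L) :
    MvPolynomial X (MvPolynomial U K) →+* MvPolynomial X L :=
  MvPolynomial.map ((MvPolynomial.aeval v : MvPolynomial U K →ₐ[K] L) : MvPolynomial U K →+* L)

/-- `G` is a comprehensive Gröbner basis of `I`. -/
def IsCGB {K U X : Type*} (L : Type*) [Field K] [Field L] [Algebra K L]
    (m : MonomialOrder X) (I : Ideal (MvPolynomial X (MvPolynomial U K)))
    (G : Set (MvPolynomial X (MvPolynomial U K))) : Prop :=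
  G.Finite ∧ G ⊆ (I : Set (MvPolynomial X (MvPolynomial U K))) ∧
    ∀ v : U → L, IsGroebnerBasis m (I.map (paramSpec (L := L) v))
      (paramSpec (L := L) v '' G)

theorem essential_iff_exists_uncovered_specialization
    {K L U X : Type*} [Field K] [Field L] [Algebra K L] [IsAlgClosed L]
    [Fintype U] [Fintype X]
    (m : MonomialOrder X) (I : Ideal (MvPolynomial X (MvPolynomial U K)))
    (G : Set (MvPolynomial X (MvPolynomial U K)))
    (hG : IsCGB L m I G) (p : MvPolynomial X (MvPolynomial U K)) (hp : p ∈ G) :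
    ¬ IsCGB L m I (G \ {p}) ↔
      ∃ v : U → L, paramSpec (L := L) v p ≠ 0 ∧
        ∀ q ∈ G \ {p}, ¬ (paramSpec (L := L) v q ≠ 0 ∧
          mdeg m (paramSpec (L := L) v q) ≤ mdeg m (paramSpec (L := L) v p)) := by
  obtain ⟨hfin, hsub, hgb⟩ := hG
  constructor
  · intro hnot
    rw [IsCGB] at hnot
    push_neg at hnot
    have hfin' : (G \ {p}).Finite := hfin.subset Set.diff_subset
    have hsub' : G \ {p} ⊆ (I : Set (MvPolynomial X (MvPolynomial U K))) :=
      fun q hq => hsub hq.1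
    obtain ⟨v, hv⟩ := hnot hfin' hsub'
    rw [IsGroebnerBasis] at hv
    push_neg at hv
    have hsubJ : paramSpec (L := L) v '' (G \ {p}) ⊆
        (I.map (paramSpec (L := L) v) : Set (MvPolynomial X L)) := by
      rintro _ ⟨q, hq, rfl⟩
      exact Ideal.mem_map_of_mem _ (hsub hq.1)
    obtain ⟨p', hp'J, hp'0, hcov⟩ := hv hsubJ
    obtain ⟨_, hGgb⟩ := hgb v
    obtain ⟨h, hhG, hh0, hhd⟩ := hGgb p' hp'J hp'0
    obtain ⟨q, hqG, rfl⟩ := hhG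
    by_cases hqp : q = p
    · subst hqp
      refine ⟨v, hh0, fun r hr hrc => ?_⟩
      exact hcov _ ⟨r, hr, rfl⟩ hrc.1 (le_trans hrc.2 hhd)
    · exact absurd hhd (hcov _ ⟨q, ⟨hqG, hqp⟩, rfl⟩ hh0)
  · rintro ⟨v, hv0, hvcov⟩ ⟨_, _, hgb'⟩
    obtain ⟨_, h2⟩ := hgb' v
    have hpJ : paramSpec (L := L) v p ∈ I.map (paramSpec (L := L) v) :=
      Ideal.mem_map_of_mem _ (hsub hp)
    obtain ⟨h, hhG, hh0, hhd⟩ := h2 _ hpJ hv0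
    obtain ⟨q, hqG, rfl⟩ := hhG
    exact hvcov q hqG ⟨hh0, hhd⟩
end

section
/- Let {(A_1, G_1), …, (A_l, G_l)} be a faithful comprehensive Gröbner system of an ideal I of P whose branches are pairwise disjoint and cover all parameter assignments (⋃_i A_i = (U → L)), each G_i ⊆ I finite, and suppose each branch is minimal: for every i, every v ∈ A_i, every g ∈ G_i satisfies σ_v(g) ≠ 0, σ_v(G_i) is a Gröbner basis of Ideal.map σ_v I, and for all distinct g, g' ∈ G_i the leading monomial m.degree(σ_v(g)) does not divide m.degree(σ_v(g')). Let G = G_1 ∪ ⋯ ∪ G_l (so G is a CGB of I) and let p ∈ G. Then G \ {p} is a comprehensive Gröbner basis of I if and only if for every branch index i with p ∈ G_i and every v ∈ A_i there exists q ∈ G \ G_i with σ_v(q) ≠ 0 and m.degree(σ_v(q)) = m.degree(σ_v(p)). -/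
open MvPolynomial

/-- `G` is a comprehensive Gröbner basis of `I` on the set `A` of parameter assignments. -/
def IsCGBOn {K U X : Type*} (L : Type*) [Field K] [Field L] [Algebra K L]
    (m : MonomialOrder X) (I : Ideal (MvPolynomial X (MvPolynomial U K)))
    (A : Set (U → L)) (G : Set (MvPolynomial X (MvPolynomial U K))) : Prop :=
  G.Finite ∧ G ⊆ (I : Set (MvPolynomial X (MvPolynomial U K))) ∧
    ∀ v ∈ A, IsGroebnerBasis m (I.map (paramSpec (L := L) v))
      (paramSpec (L := L) v '' G)

/-! At an assignment `v` in the branch `A i`, the specialized `Gb i` is a minimal Gröbner basis of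
the specialized ideal, so `σ_v p` is the only element of `σ_v (Gb i)` whose leading monomial divides
`lm(σ_v p)`. If `G \ {p}` stays a Gröbner basis at `v`, some `q ≠ p` has `lm(σ_v q) ∣ lm(σ_v p)`; then
`q ∉ Gb i`, and `lm(σ_v q)` is in turn divisible by a leading monomial of `σ_v (Gb i)`, which can only
be `lm(σ_v p)`, forcing equality. Conversely, such a `q` can stand in for `p` in the Gröbner basis
`σ_v (Gb i)` at every `v ∈ A i`, and the branches cover all assignments. -/

section GroebnerBasis

variable {σ F : Type*} [Field F] {m : MonomialOrder σ} {J : Ideal (MvPolynomial σ F)}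

theorem IsGroebnerBasis.of_forall_exists_le {H H' : Set (MvPolynomial σ F)}
    (hH : IsGroebnerBasis m J H) (hH'J : H' ⊆ J)
    (hle : ∀ h ∈ H, h ≠ 0 → ∃ h' ∈ H', h' ≠ 0 ∧ mdeg m h' ≤ mdeg m h) :
    IsGroebnerBasis m J H' := by
  refine ⟨hH'J, fun f hf hf0 => ?_⟩
  obtain ⟨h, hH, hh0, hhf⟩ := hH.2 f hf hf0
  obtain ⟨h', hH', hh'0, hh'h⟩ := hle h hH hh0
  exact ⟨h', hH', hh'0, hh'h.trans hhf⟩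

theorem IsGroebnerBasis.mdeg_eq_of_le {ι : Type*} {b : ι → MvPolynomial σ F} {s : Set ι}
    (hb : IsGroebnerBasis m J (b '' s))
    (hmin : ∀ g ∈ s, ∀ g' ∈ s, g ≠ g' → ¬ mdeg m (b g) ≤ mdeg m (b g'))
    {i : ι} (hi : i ∈ s) {f : MvPolynomial σ F} (hf : f ∈ J) (hf0 : f ≠ 0)
    (hle : mdeg m f ≤ mdeg m (b i)) : mdeg m f = mdeg m (b i) := by
  obtain ⟨_, ⟨g, hg, rfl⟩, -, hgf⟩ := hb.2 f hf hf0
  obtain rfl | hgi := eq_or_ne g i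
  · exact le_antisymm hle hgf
  · exact absurd (hgf.trans hle) (hmin g hg i hi hgi)

end GroebnerBasis

section Specialization

variable {R σ F : Type*} [CommRing R] [Field F] {m : MonomialOrder σ}
  {φ : R →+* MvPolynomial σ F} {I : Ideal R} {G B : Set R} {p : R}

theorem exists_mdeg_eq_of_isGroebnerBasis_diff (hGI : G ⊆ I) (hpB : p ∈ B) (hBG : B ⊆ G)
    (hp0 : φ p ≠ 0) (hB : IsGroebnerBasis m (I.map φ) (φ '' B))
    (hmin : ∀ g ∈ B, ∀ g' ∈ B, g ≠ g' → ¬ mdeg m (φ g) ≤ mdeg m (φ g'))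
    (hGp : IsGroebnerBasis m (I.map φ) (φ '' (G \ {p}))) :
    ∃ q ∈ G \ B, φ q ≠ 0 ∧ mdeg m (φ q) = mdeg m (φ p) := by
  obtain ⟨_, ⟨q, ⟨hqG, hqp⟩, rfl⟩, hq0, hqle⟩ :=
    hGp.2 (φ p) (Ideal.mem_map_of_mem φ (hGI (hBG hpB))) hp0
  have hqB : q ∉ B := fun hqB => hmin q hqB p hpB hqp hqle
  exact ⟨q, ⟨hqG, hqB⟩, hq0,
    hB.mdeg_eq_of_le hmin hpB (Ideal.mem_map_of_mem φ (hGI hqG)) hq0 hqle⟩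

theorem isGroebnerBasis_diff_of_exists_mdeg_eq (hGI : G ⊆ I) (hBG : B ⊆ G)
    (hB : IsGroebnerBasis m (I.map φ) (φ '' B))
    (hcov : p ∈ B → ∃ q ∈ G \ B, φ q ≠ 0 ∧ mdeg m (φ q) = mdeg m (φ p)) :
    IsGroebnerBasis m (I.map φ) (φ '' (G \ {p})) := by
  refine hB.of_forall_exists_le
    (Set.image_subset_iff.2 fun _ hx => Ideal.mem_map_of_mem φ (hGI hx.1)) ?_
  rintro _ ⟨g, hgB, rfl⟩ hg0
  obtain rfl | hgp := eq_or_ne g p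
  · obtain ⟨q, ⟨hqG, hqB⟩, hq0, hdeg⟩ := hcov hgB
    exact ⟨φ q, ⟨q, ⟨hqG, fun hqg => hqB (hqg ▸ hgB)⟩, rfl⟩, hq0, hdeg.le⟩
  · exact ⟨φ g, ⟨g, ⟨hBG hgB, hgp⟩, rfl⟩, hg0, le_rfl⟩

end Specialization

theorem nonessential_iff_covered_in_every_branch_general
    {K L U X : Type*} [Field K] [Field L] [Algebra K L]
    (m : MonomialOrder X) (I : Ideal (MvPolynomial X (MvPolynomial U K)))
    (l : ℕ) (A : Fin l → Set (U → L))
    (Gb : Fin l → Set (MvPolynomial X (MvPolynomial U K)))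
    (hcover : (⋃ i, A i) = Set.univ)
    (hfin : ∀ i, (Gb i).Finite)
    (hfaithful : ∀ i, Gb i ⊆ (I : Set (MvPolynomial X (MvPolynomial U K))))
    (hminimal : ∀ i, ∀ v ∈ A i,
      (∀ g ∈ Gb i, paramSpec (L := L) v g ≠ 0) ∧
      IsGroebnerBasis m (I.map (paramSpec (L := L) v)) (paramSpec (L := L) v '' Gb i) ∧
      (∀ g ∈ Gb i, ∀ g' ∈ Gb i, g ≠ g' →
        ¬ mdeg m (paramSpec (L := L) v g) ≤ mdeg m (paramSpec (L := L) v g')))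
    (G : Set (MvPolynomial X (MvPolynomial U K))) (hG : G = ⋃ i, Gb i)
    (p : MvPolynomial X (MvPolynomial U K)) :
    IsCGB L m I (G \ {p}) ↔
      ∀ i, p ∈ Gb i → ∀ v ∈ A i, ∃ q ∈ G \ Gb i,
        paramSpec (L := L) v q ≠ 0 ∧
        mdeg m (paramSpec (L := L) v q) = mdeg m (paramSpec (L := L) v p) := by
  subst hG
  have hGI : (⋃ i, Gb i) ⊆ I := Set.iUnion_subset hfaithful
  constructor
  · rintro ⟨-, -, hGp⟩ i hpi v hv
    obtain ⟨hne0, hB, hmin⟩ := hminimal i v hv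
    exact exists_mdeg_eq_of_isGroebnerBasis_diff hGI hpi (Set.subset_iUnion Gb i)
      (hne0 p hpi) hB hmin (hGp v)
  · intro hcov
    refine ⟨(Set.finite_iUnion hfin).sdiff, Set.sdiff_subset.trans hGI, fun v => ?_⟩
    obtain ⟨i, hv⟩ := Set.mem_iUnion.mp (hcover ▸ Set.mem_univ v)
    exact isGroebnerBasis_diff_of_exists_mdeg_eq hGI (Set.subset_iUnion Gb i)
      (hminimal i v hv).2.1 (fun hpi => hcov i hpi v hv)

theorem nonessential_iff_covered_in_every_branch
    {K L U X : Type*} [Field K] [Field L] [Algebra K L] [IsAlgClosed L]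
    [Fintype U] [Fintype X]
    (m : MonomialOrder X) (I : Ideal (MvPolynomial X (MvPolynomial U K)))
    (l : ℕ) (A : Fin l → Set (U → L))
    (Gb : Fin l → Set (MvPolynomial X (MvPolynomial U K)))
    (hdisj : ∀ i j, i ≠ j → Disjoint (A i) (A j))
    (hcover : (⋃ i, A i) = Set.univ)
    (hfin : ∀ i, (Gb i).Finite)
    (hfaithful : ∀ i, Gb i ⊆ (I : Set (MvPolynomial X (MvPolynomial U K))))
    (hminimal : ∀ i, ∀ v ∈ A i,
      (∀ g ∈ Gb i, paramSpec (L := L) v g ≠ 0) ∧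
      IsGroebnerBasis m (I.map (paramSpec (L := L) v)) (paramSpec (L := L) v '' Gb i) ∧
      (∀ g ∈ Gb i, ∀ g' ∈ Gb i, g ≠ g' →
        ¬ mdeg m (paramSpec (L := L) v g) ≤ mdeg m (paramSpec (L := L) v g')))
    (G : Set (MvPolynomial X (MvPolynomial U K))) (hG : G = ⋃ i, Gb i)
    (p : MvPolynomial X (MvPolynomial U K)) (hp : p ∈ G) :
    IsCGB L m I (G \ {p}) ↔
      ∀ i, p ∈ Gb i → ∀ v ∈ A i, ∃ q ∈ G \ Gb i,
        paramSpec (L := L) v q ≠ 0 ∧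
        mdeg m (paramSpec (L := L) v q) = mdeg m (paramSpec (L := L) v p) :=
  nonessential_iff_covered_in_every_branch_general m I l A Gb hcover hfin hfaithful hminimal G hG p
end

section
/- In Weispfenning's example with parameters u, v and variables x, y, z, lexicographic monomial order with z > y > x, let f = u·y + x, g = v·z + x + 1, h = v·z − u·y + 1 (so h = g − f) in P, and I = Ideal.span {f, g}. Then the set {f, g, h} is a comprehensive Gröbner basis of I: for every parameter assignment v̄ : {u,v} → L, σ_{v̄}({f, g, h}) is a Gröbner basis of Ideal.map σ_{v̄} I. -/
open MvPolynomial

namespace Weispfenning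

/-- Variables: `z = X 0 > y = X 1 > x = X 2` under the lexicographic order. -/
noncomputable abbrev m3 : MonomialOrder (Fin 3) := MonomialOrder.lex

variable (K : Type*) [Field K]

/-- `f = u·y + x`. -/
noncomputable def f : MvPolynomial (Fin 3) (MvPolynomial (Fin 2) K) :=
  MvPolynomial.C (MvPolynomial.X 0) * MvPolynomial.X 1 + MvPolynomial.X 2

/-- `g = v·z + x + 1`. -/
noncomputable def g : MvPolynomial (Fin 3) (MvPolynomial (Fin 2) K) :=
  MvPolynomial.C (MvPolynomial.X 1) * MvPolynomial.X 0 + MvPolynomial.X 2 + 1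

/-- `h = v·z - u·y + 1`. -/
noncomputable def h : MvPolynomial (Fin 3) (MvPolynomial (Fin 2) K) :=
  MvPolynomial.C (MvPolynomial.X 1) * MvPolynomial.X 0
    - MvPolynomial.C (MvPolynomial.X 0) * MvPolynomial.X 1 + 1

/-- `I = ⟨f, g⟩`. -/
noncomputable def I : Ideal (MvPolynomial (Fin 3) (MvPolynomial (Fin 2) K)) :=
  Ideal.span {f K, g K}

end Weispfenning

/-!
After specializing the parameters, `σf` and `σg` are linear with distinct leading variables
(unless both parameters vanish, in which case `σh = 1`), so their common zero set is an affine
line `t ↦ γ(t)` on which the third variable `xᵢ` is a free coordinate. If a nonzero `p` in the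
specialized ideal had a leading monomial divisible by neither leading variable, that monomial
would be a pure power `xᵢ ^ k`; the lexicographic order then makes `p(γ(t))` a polynomial of
degree `k` with leading coefficient a nonzero multiple of that of `p`, whereas it vanishes
identically.
-/

theorem mdeg_eq_degree {σ R : Type*} [CommSemiring R] (m : MonomialOrder σ)
    (p : MvPolynomial σ R) : mdeg m p = m.degree p :=
  rfl

namespace Finsupp

theorem toLex_lt_single_iff {σ : Type*} [LinearOrder σ] {s : σ →₀ ℕ} {i : σ} {k : ℕ} :
    toLex s < toLex (single i k) ↔ (∀ j < i, s j = 0) ∧ s i < k := by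
  rw [Lex.lt_iff]
  constructor
  · rintro ⟨j, hlt, hj⟩
    obtain rfl : j = i := by
      by_contra hne
      simp [single_eq_of_ne hne] at hj
    exact ⟨fun d hd => by simpa [single_eq_of_ne hd.ne] using hlt d hd, by simpa using hj⟩
  · rintro ⟨hzero, hi⟩
    exact ⟨i, fun d hd => by simp [hzero d hd, single_eq_of_ne hd.ne], by simpa using hi⟩

theorem weight_le_apply_of_eq_zero_of_lt {σ : Type*} [LinearOrder σ] {s : σ →₀ ℕ} {i : σ}
    {w : σ → ℕ} (hs : ∀ j < i, s j = 0) (hwi : w i ≤ 1) (hw : ∀ j > i, w j = 0) :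
    s.weight w ≤ s i := by
  rw [weight_apply, Finsupp.sum, Finset.sum_eq_single i]
  · simpa using Nat.mul_le_mul_left (s i) hwi
  · intro j _ hji
    rcases hji.lt_or_gt with h | h <;> simp [hs, hw, h]
  · intro hi
    simp [notMem_support_iff.1 hi]

end Finsupp

theorem isGroebnerBasis_of_one_mem {σ F : Type*} [Field F] {m : MonomialOrder σ}
    {J : Ideal (MvPolynomial σ F)} {H : Set (MvPolynomial σ F)} (hHJ : H ⊆ J) (h1 : 1 ∈ H) :
    IsGroebnerBasis m J H :=
  ⟨hHJ, fun p _ _ => ⟨1, h1, one_ne_zero, by simp [mdeg_eq_degree]⟩⟩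

section AevalLine

variable {σ R : Type*} [CommSemiring R]

theorem natDegree_aeval_monomial_le (γ : σ → Polynomial R) (s : σ →₀ ℕ) (c : R) :
    (aeval γ (monomial s c)).natDegree ≤ s.weight fun j => (γ j).natDegree := by
  rw [aeval_monomial, Polynomial.algebraMap_eq, Finsupp.weight_apply, Finsupp.prod, Finsupp.sum]
  calc _ ≤ (Polynomial.C c).natDegree + (∏ j ∈ s.support, γ j ^ s j).natDegree :=
        Polynomial.natDegree_mul_le
    _ ≤ 0 + ∑ j ∈ s.support, s j * (γ j).natDegree :=
        add_le_add (by simp) ((Polynomial.natDegree_prod_le _ _).trans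
          (Finset.sum_le_sum fun j _ => Polynomial.natDegree_pow_le))
    _ = _ := by simp

theorem MonomialOrder.degree_add_one {m : MonomialOrder σ} {q : MvPolynomial σ R}
    (hq : m.degree q ≠ 0) : m.degree (q + 1) = m.degree q :=
  degree_add_of_lt (by simpa [toSyn_lt_iff_ne_zero] using hq)

variable [LinearOrder σ] [WellFoundedGT σ]

theorem coeff_aeval_of_lex_degree_eq_single {γ : σ → Polynomial R} {i : σ}
    (hγi : (γ i).natDegree ≤ 1) (hγ : ∀ j > i, (γ j).natDegree = 0)
    {p : MvPolynomial σ R} {k : ℕ} (hp : MonomialOrder.lex.degree p = Finsupp.single i k) :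
    (aeval γ p).coeff k = MonomialOrder.lex.leadingCoeff p * (γ i).coeff 1 ^ k := by
  classical
  conv_lhs => rw [p.as_sum, map_sum, Polynomial.finsetSum_coeff]
  rw [Finset.sum_eq_single (Finsupp.single i k)]
  · rw [aeval_monomial, Finsupp.prod_single_index (by simp), Polynomial.algebraMap_eq,
      Polynomial.coeff_C_mul, MonomialOrder.leadingCoeff, hp,
      ← Polynomial.coeff_pow_of_natDegree_le hγi, mul_one]
  · -- Being lex-smaller than `X i ^ k`, the monomial `s` avoids every `X j` with `j < i` and has
    -- `X i`-degree `< k`; the `γ j` with `j > i` are constants, so its image has degree `< k`.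
    intro s hs hne
    have hlt : toLex s < toLex (Finsupp.single i k) :=
      lt_of_le_of_ne (hp ▸ MonomialOrder.lex_le_iff.1 (MonomialOrder.le_degree hs))
        (toLex.injective.ne hne)
    obtain ⟨hzero, hsi⟩ := Finsupp.toLex_lt_single_iff.1 hlt
    refine Polynomial.coeff_eq_zero_of_natDegree_lt ?_
    calc _ ≤ _ := natDegree_aeval_monomial_le γ s _
      _ ≤ s i := Finsupp.weight_le_apply_of_eq_zero_of_lt hzero hγi hγ
      _ < k := hsi
  · intro hs
    rw [notMem_support_iff.1 hs, monomial_zero, map_zero, Polynomial.coeff_zero]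

theorem isGroebnerBasis_lex_of_le_ker_aeval {F : Type*} [Field F]
    {J : Ideal (MvPolynomial σ F)} {G : Set (MvPolynomial σ F)} (hGJ : G ⊆ J)
    {γ : σ → Polynomial F} {i : σ} (hγi : (γ i).natDegree ≤ 1) (hγi₁ : (γ i).coeff 1 ≠ 0)
    (hγ : ∀ j > i, (γ j).natDegree = 0) (hJ : J ≤ RingHom.ker (aeval γ))
    (hG : ∀ j ≠ i, ∃ g ∈ G, MonomialOrder.lex.degree g = Finsupp.single j 1) :
    IsGroebnerBasis MonomialOrder.lex J G := by
  refine ⟨hGJ, fun p hp hp0 => ?_⟩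
  by_contra! hmin
  simp only [mdeg_eq_degree] at hmin
  have hdeg : MonomialOrder.lex.degree p = Finsupp.single i (MonomialOrder.lex.degree p i) := by
    ext j
    obtain rfl | hji := eq_or_ne j i
    · simp
    obtain ⟨g, hgG, hg⟩ := hG j hji
    have hg0 : g ≠ 0 := by
      rintro rfl
      rw [MonomialOrder.degree_zero] at hg
      exact Finsupp.single_ne_zero.2 one_ne_zero hg.symm
    rw [Finsupp.single_eq_of_ne hji]
    by_contra hpj
    exact hmin g hgG hg0 (hg ▸ Finsupp.single_le_iff.2 (Nat.one_le_iff_ne_zero.2 hpj))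
  have hcoeff := coeff_aeval_of_lex_degree_eq_single hγi hγ hdeg
  rw [RingHom.mem_ker.1 (hJ hp), Polynomial.coeff_zero, eq_comm] at hcoeff
  exact hp0 (MonomialOrder.leadingCoeff_eq_zero_iff.1
    (mul_eq_zero.1 hcoeff |>.resolve_right (pow_ne_zero _ hγi₁)))

end AevalLine

section LexDegree

variable {σ F : Type*} [LinearOrder σ] [WellFoundedGT σ] [Field F]

theorem lex_degree_C_mul_X_add_X {a : F} (ha : a ≠ 0) {i j : σ} (hij : i < j) :
    MonomialOrder.lex.degree (C a * X i + X j : MvPolynomial σ F) = Finsupp.single i 1 := by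
  classical
  have hCX : MonomialOrder.lex.degree (C a * X i : MvPolynomial σ F) = Finsupp.single i 1 := by
    rw [C_mul_X_eq_monomial, MonomialOrder.degree_monomial, if_neg ha]
  rw [MonomialOrder.degree_add_of_lt] <;>
    simp [hCX, MonomialOrder.degree_X, MonomialOrder.lex_lt_iff, Finsupp.Lex.single_lt_iff, hij]

end LexDegree

namespace Weispfenning

variable {K L : Type*} [Field K] [Field L] [Algebra K L] (v : Fin 2 → L)

theorem fgh_subset_I : ({f K, g K, h K} : Set _) ⊆ (I K : Set _) := by
  have hf : f K ∈ I K := Ideal.subset_span (Set.mem_insert _ _)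
  have hg : g K ∈ I K := Ideal.subset_span (Set.mem_insert_of_mem _ rfl)
  have hgf : h K = g K - f K := by
    simp only [f, g, h]
    ring
  simp only [Set.insert_subset_iff, Set.singleton_subset_iff, SetLike.mem_coe, hgf]
  exact ⟨hf, hg, sub_mem hg hf⟩

@[simp]
theorem paramSpec_f : paramSpec v (f K) = C (v 0) * X 1 + X 2 := by
  simp [paramSpec, f]

@[simp]
theorem paramSpec_g : paramSpec v (g K) = C (v 1) * X 0 + X 2 + 1 := by
  simp [paramSpec, g]

@[simp]
theorem paramSpec_h : paramSpec v (h K) = C (v 1) * X 0 - C (v 0) * X 1 + 1 := by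
  simp [paramSpec, h]

theorem map_I : (I K).map (paramSpec v) = Ideal.span {paramSpec v (f K), paramSpec v (g K)} := by
  rw [I, Ideal.map_span, Set.image_pair]

theorem image_fgh_subset_map_I :
    paramSpec v '' {f K, g K, h K} ⊆ ((I K).map (paramSpec v) : Set _) :=
  Set.image_subset_iff.2 fun _ hq => Ideal.mem_map_of_mem _ (fgh_subset_I hq)

theorem isGroebnerBasis_of_eq_zero_of_eq_zero (ha : v 0 = 0) (hb : v 1 = 0) :
    IsGroebnerBasis m3 ((I K).map (paramSpec v)) (paramSpec v '' {f K, g K, h K}) := by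
  exact isGroebnerBasis_of_one_mem (image_fgh_subset_map_I v) ⟨h K, by simp, by simp [ha, hb]⟩

theorem isGroebnerBasis_of_eq_zero_of_ne_zero (ha : v 0 = 0) (hb : v 1 ≠ 0) :
    IsGroebnerBasis m3 ((I K).map (paramSpec v)) (paramSpec v '' {f K, g K, h K}) := by
  refine isGroebnerBasis_lex_of_le_ker_aeval (image_fgh_subset_map_I v) (i := 1)
    (γ := ![Polynomial.C (-(v 1)⁻¹), Polynomial.X, 0]) (by simp) (by simp) ?_ ?_ ?_
  · intro j hj
    fin_cases j <;> simp_all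
  · rw [map_I, Ideal.span_le]
    simp [Set.insert_subset_iff, ha, ← Polynomial.C_mul, hb]
  · intro j hj
    fin_cases j
    · exact ⟨_, ⟨g K, by simp, rfl⟩, by
        simp [MonomialOrder.degree_add_one, lex_degree_C_mul_X_add_X hb]⟩
    · exact absurd rfl hj
    · exact ⟨_, ⟨f K, by simp, rfl⟩, by simp [ha, MonomialOrder.degree_X]⟩

theorem isGroebnerBasis_of_ne_zero_of_eq_zero (ha : v 0 ≠ 0) (hb : v 1 = 0) :
    IsGroebnerBasis m3 ((I K).map (paramSpec v)) (paramSpec v '' {f K, g K, h K}) := by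
  refine isGroebnerBasis_lex_of_le_ker_aeval (image_fgh_subset_map_I v) (i := 0)
    (γ := ![Polynomial.X, Polynomial.C (v 0)⁻¹, -1]) (by simp) (by simp) ?_ ?_ ?_
  · intro j hj
    fin_cases j <;> simp_all
  · rw [map_I, Ideal.span_le]
    simp [Set.insert_subset_iff, hb, ← Polynomial.C_mul, ha]
  · intro j hj
    fin_cases j
    · exact absurd rfl hj
    · exact ⟨_, ⟨f K, by simp, rfl⟩, by simp [lex_degree_C_mul_X_add_X ha]⟩
    · exact ⟨_, ⟨g K, by simp, rfl⟩, by
        simp [hb, MonomialOrder.degree_add_one, MonomialOrder.degree_X]⟩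

theorem isGroebnerBasis_of_ne_zero_of_ne_zero (ha : v 0 ≠ 0) (hb : v 1 ≠ 0) :
    IsGroebnerBasis m3 ((I K).map (paramSpec v)) (paramSpec v '' {f K, g K, h K}) := by
  refine isGroebnerBasis_lex_of_le_ker_aeval (image_fgh_subset_map_I v) (i := 2)
    (γ := ![Polynomial.C (-(v 1)⁻¹) * (Polynomial.X + 1), Polynomial.C (-(v 0)⁻¹) * Polynomial.X,
      Polynomial.X]) (by simp) (by simp) ?_ ?_ ?_
  · intro j hj
    fin_cases j <;> simp_all
  · rw [map_I, Ideal.span_le]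
    simp [Set.insert_subset_iff, ← mul_assoc, ← Polynomial.C_mul, ha, hb]
  · intro j hj
    fin_cases j
    · exact ⟨_, ⟨g K, by simp, rfl⟩, by
        simp [MonomialOrder.degree_add_one, lex_degree_C_mul_X_add_X hb]⟩
    · exact ⟨_, ⟨f K, by simp, rfl⟩, by simp [lex_degree_C_mul_X_add_X ha]⟩
    · exact absurd rfl hj

end Weispfenning

open Weispfenning in
theorem weispfenning_fgh_is_CGB_general
    {K L : Type*} [Field K] [Field L] [Algebra K L] :
    IsCGB L (m3) (I K) {f K, g K, h K} := by
  refine ⟨Set.toFinite _, fgh_subset_I, fun v => ?_⟩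
  rcases eq_or_ne (v 0) 0 with ha | ha <;> rcases eq_or_ne (v 1) 0 with hb | hb
  · exact isGroebnerBasis_of_eq_zero_of_eq_zero v ha hb
  · exact isGroebnerBasis_of_eq_zero_of_ne_zero v ha hb
  · exact isGroebnerBasis_of_ne_zero_of_eq_zero v ha hb
  · exact isGroebnerBasis_of_ne_zero_of_ne_zero v ha hb

open Weispfenning in
theorem weispfenning_fgh_is_CGB
    {K L : Type*} [Field K] [Field L] [Algebra K L] [IsAlgClosed L] :
    IsCGB L (m3) (I K) {f K, g K, h K} :=
  weispfenning_fgh_is_CGB_general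
end

section
/- In Weispfenning's example with parameters u, v and variables x, y, z, lexicographic monomial order with z > y > x, let f = u·y + x, g = v·z + x + 1 in P and I = Ideal.span {f, g}. Then {f, g} is NOT a comprehensive Gröbner basis of I: for the parameter assignment v̄ sending u ↦ 0 and v ↦ 0, the constant polynomial 1 is a nonzero element of Ideal.map σ_{v̄} I (since σ_{v̄}(f) = x and σ_{v̄}(g) = x + 1 generate the unit ideal), yet no element q of σ_{v̄}({f, g}) satisfies q ≠ 0 and m.degree(q) ≤ m.degree(1) = 0. Hence h = g − f is essential in the CGB {f, g, h}. -/
open MvPolynomial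

lemma mdeg_one' {σ R : Type*} [CommRing R] [Nontrivial R] (m : MonomialOrder σ) :
    mdeg m (1 : MvPolynomial σ R) = 0 := by
  classical
  have h1 : (1 : MvPolynomial σ R) = MvPolynomial.monomial 0 1 := by simp
  rw [mdeg, h1, MvPolynomial.support_monomial, if_neg one_ne_zero]
  simp

lemma not_mdeg_le_zero' {σ R : Type*} [CommRing R] (m : MonomialOrder σ)
    {p : MvPolynomial σ R} {s : σ →₀ ℕ} (hs : s ∈ p.support) (h0 : s ≠ 0) :
    ¬ mdeg m p ≤ 0 := by
  intro hle
  have h' : mdeg m p = 0 :=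
    le_antisymm hle (Finsupp.le_def.mpr fun _ => Nat.zero_le _)
  have hsup : (p.support.sup fun t => m.toSyn t) = 0 := by
    have := congrArg m.toSyn h'
    simpa [mdeg] using this
  have hle' : m.toSyn s ≤ 0 := hsup ▸ Finset.le_sup (f := fun t => m.toSyn t) hs
  have : m.toSyn s = 0 := le_antisymm hle' (by rw [← m.bot_eq_zero]; exact bot_le)
  exact h0 (by simpa using m.toSyn.injective (by simpa using this))

open Weispfenning in
lemma spec_f {K L : Type*} [Field K] [Field L] [Algebra K L] :
    paramSpec (L := L) (fun _ : Fin 2 => (0 : L)) (f K) = X 2 := by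
  unfold paramSpec f
  rw [RingHom.map_add, RingHom.map_mul, MvPolynomial.map_C, MvPolynomial.map_X]
  simp

open Weispfenning in
lemma spec_g {K L : Type*} [Field K] [Field L] [Algebra K L] :
    paramSpec (L := L) (fun _ : Fin 2 => (0 : L)) (g K) = X 2 + 1 := by
  unfold paramSpec g
  rw [RingHom.map_add, RingHom.map_add, RingHom.map_one, RingHom.map_mul,
    MvPolynomial.map_C, MvPolynomial.map_X]
  simp

open Weispfenning in
/-- At `u ↦ 0, v ↦ 0`, the constant `1` lies in the specialized ideal but no element of
`σ({f, g})` has leading monomial dividing it; hence `{f, g}` is not a CGB of `I`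
(and so `h = g - f` is essential in the CGB `{f, g, h}`). -/

theorem weispfenning_fg_not_CGB
    {K L : Type*} [Field K] [Field L] [Algebra K L] [IsAlgClosed L] :
    (1 : MvPolynomial (Fin 3) L) ∈
        (I K).map (paramSpec (L := L) (fun _ : Fin 2 => (0 : L))) ∧
    (1 : MvPolynomial (Fin 3) L) ≠ 0 ∧
    (∀ q ∈ paramSpec (L := L) (fun _ : Fin 2 => (0 : L)) '' {f K, g K},
      ¬ (q ≠ 0 ∧ mdeg m3 q ≤ mdeg m3 (1 : MvPolynomial (Fin 3) L))) ∧
    ¬ IsCGB L m3 (I K) {f K, g K} := by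
  classical
  set σ := paramSpec (K := K) (L := L) (U := Fin 2) (X := Fin 3) (fun _ : Fin 2 => (0 : L)) with hσ
  have hfI : f K ∈ I K := Ideal.subset_span (by simp)
  have hgI : g K ∈ I K := Ideal.subset_span (by simp [Set.mem_insert_iff])
  have hmem : (1 : MvPolynomial (Fin 3) L) ∈ (I K).map σ := by
    have h1 : σ (g K) - σ (f K) = 1 := by
      rw [spec_f, spec_g]; ring
    have := sub_mem (Ideal.mem_map_of_mem σ hgI) (Ideal.mem_map_of_mem σ hfI)
    rwa [h1] at this
  have hkey : ∀ q ∈ σ '' {f K, g K},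
      ¬ (q ≠ 0 ∧ mdeg m3 q ≤ mdeg m3 (1 : MvPolynomial (Fin 3) L)) := by
    rintro q ⟨p, hp, rfl⟩ ⟨-, hle⟩
    rw [mdeg_one'] at hle
    rcases hp with rfl | rfl
    · refine not_mdeg_le_zero' m3 (p := σ (f K)) (s := Finsupp.single 2 1) ?_ ?_ hle
      · rw [hσ, spec_f, MvPolynomial.mem_support_iff]
        simp [MvPolynomial.coeff_X']
      · simp [Finsupp.single_eq_zero]
    · refine not_mdeg_le_zero' m3 (p := σ (g K)) (s := Finsupp.single 2 1) ?_ ?_ hle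
      · rw [hσ, spec_g, MvPolynomial.mem_support_iff]
        simp [MvPolynomial.coeff_add, MvPolynomial.coeff_X', MvPolynomial.coeff_one,
          eq_comm, Finsupp.single_eq_zero]
      · simp [Finsupp.single_eq_zero]
  refine ⟨hmem, one_ne_zero, hkey, ?_⟩
  rintro ⟨-, -, hGB⟩
  obtain ⟨-, hB⟩ := hGB (fun _ : Fin 2 => (0 : L))
  obtain ⟨q, hq, hq0, hqle⟩ := hB 1 hmem one_ne_zero
  exact hkey q hq ⟨hq0, hqle⟩
end

section
/- In Weispfenning's example with parameters u, v and variables x, y, z, lexicographic monomial order with z > y > x, let f = u·y + x, g = v·z + x + 1, h = v·z − u·y + 1 in P and I = Ideal.span {f, g}. Then {g, h} is NOT a comprehensive Gröbner basis of I: for the parameter assignment v̄ sending u ↦ 1 and v ↦ 1, σ_{v̄}(f) = y + x is a nonzero element of Ideal.map σ_{v̄} I with leading monomial y, while σ_{v̄}(g) = z + x + 1 and σ_{v̄}(h) = z − y + 1 both have leading monomial z, which does not divide y. Hence f is essential in the CGB {f, g, h}. -/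
open MvPolynomial

section Aux

variable {L : Type*} [Field L]

lemma mdeg_eq_of {σ R : Type*} [CommSemiring R] (m : MonomialOrder σ)
    {p : MvPolynomial σ R} {b : σ →₀ ℕ} (hb : MvPolynomial.coeff b p ≠ 0)
    (hmax : ∀ s ∈ p.support, m.toSyn s ≤ m.toSyn b) : mdeg m p = b := by
  have h1 : p.support.sup (fun s => m.toSyn s) = m.toSyn b :=
    le_antisymm (Finset.sup_le hmax)
      (Finset.le_sup (MvPolynomial.mem_support_iff.mpr hb))
  rw [mdeg, h1, AddEquiv.symm_apply_apply]

lemma lt01' : toLex (Finsupp.single (1 : Fin 3) 1) < toLex (Finsupp.single (0 : Fin 3) 1) := by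
  use 0; simp

lemma lt12' : toLex (Finsupp.single (2 : Fin 3) 1) < toLex (Finsupp.single (1 : Fin 3) 1) := by
  use 1; simp

lemma lt01 : (MonomialOrder.lex : MonomialOrder (Fin 3)).toSyn (Finsupp.single 1 1)
    < (MonomialOrder.lex).toSyn (Finsupp.single 0 1) := lt01'

lemma lt12 : (MonomialOrder.lex : MonomialOrder (Fin 3)).toSyn (Finsupp.single 2 1)
    < (MonomialOrder.lex).toSyn (Finsupp.single 1 1) := lt12'

lemma lt02 : (MonomialOrder.lex : MonomialOrder (Fin 3)).toSyn (Finsupp.single 2 1)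
    < (MonomialOrder.lex).toSyn (Finsupp.single 0 1) :=
  lt_trans lt12 lt01

lemma mdeg_sf : mdeg Weispfenning.m3 ((X 1 + X 2 : MvPolynomial (Fin 3) L))
    = Finsupp.single 1 1 := by
  apply mdeg_eq_of
  · simp [coeff_X', Finsupp.single_eq_single_iff]
  · intro s hs
    have := MvPolynomial.support_add hs
    rw [support_X, support_X] at this
    simp only [Finset.mem_union, Finset.mem_singleton] at this
    rcases this with rfl | rfl
    · exact le_refl _
    · exact le_of_lt lt12

lemma mdeg_sg : mdeg Weispfenning.m3 ((X 0 + X 2 + 1 : MvPolynomial (Fin 3) L))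
    = Finsupp.single 0 1 := by
  apply mdeg_eq_of
  · simp [coeff_X', coeff_one, Finsupp.single_eq_single_iff, Finsupp.single_eq_zero, eq_comm]
  · intro s hs
    have h2 := MvPolynomial.support_add hs
    simp only [Finset.mem_union] at h2
    rcases h2 with h2 | h2
    · have := MvPolynomial.support_add h2
      rw [support_X, support_X] at this
      simp only [Finset.mem_union, Finset.mem_singleton] at this
      rcases this with rfl | rfl
      · exact le_refl _
      · exact le_of_lt lt02
    · rw [show (1 : MvPolynomial (Fin 3) L) = monomial 0 1 by simp] at h2
      have := MvPolynomial.support_monomial_subset h2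
      simp only [Finset.mem_singleton] at this
      subst this
      rw [map_zero]
      exact bot_le

lemma mdeg_sh : mdeg Weispfenning.m3 ((X 0 - X 1 + 1 : MvPolynomial (Fin 3) L))
    = Finsupp.single 0 1 := by
  apply mdeg_eq_of
  · simp [coeff_X', coeff_one, Finsupp.single_eq_single_iff, Finsupp.single_eq_zero, eq_comm]
  · intro s hs
    have h2 := MvPolynomial.support_add hs
    simp only [Finset.mem_union] at h2
    rcases h2 with h2 | h2
    · have := MvPolynomial.support_sub _ _ _ h2
      rw [support_X, support_X] at this
      simp only [Finset.mem_union, Finset.mem_singleton] at this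
      rcases this with rfl | rfl
      · exact le_refl _
      · exact le_of_lt lt01
    · rw [show (1 : MvPolynomial (Fin 3) L) = monomial 0 1 by simp] at h2
      have := MvPolynomial.support_monomial_subset h2
      simp only [Finset.mem_singleton] at this
      subst this
      rw [map_zero]
      exact bot_le

end Aux

set_option maxHeartbeats 1000000 in
set_option synthInstance.maxHeartbeats 400000 in
open Weispfenning in
/-- At `u ↦ 1, v ↦ 1`, `σ(f) = y + x` has leading monomial `y`, while `σ(g)` and `σ(h)`
have leading monomial `z`, which does not divide `y`; hence `{g, h}` is not a CGB of `I`
(and so `f` is essential in the CGB `{f, g, h}`). -/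
theorem weispfenning_gh_not_CGB
    {K L : Type*} [Field K] [Field L] [Algebra K L] [IsAlgClosed L] :
    paramSpec (L := L) (fun _ : Fin 2 => (1 : L)) (f K) ∈
        (I K).map (paramSpec (L := L) (fun _ : Fin 2 => (1 : L))) ∧
    paramSpec (L := L) (fun _ : Fin 2 => (1 : L)) (f K) ≠ 0 ∧
    mdeg m3 (paramSpec (L := L) (fun _ : Fin 2 => (1 : L)) (f K)) =
      Finsupp.single (1 : Fin 3) 1 ∧
    mdeg m3 (paramSpec (L := L) (fun _ : Fin 2 => (1 : L)) (g K)) =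
      Finsupp.single (0 : Fin 3) 1 ∧
    mdeg m3 (paramSpec (L := L) (fun _ : Fin 2 => (1 : L)) (h K)) =
      Finsupp.single (0 : Fin 3) 1 ∧
    ¬ (Finsupp.single (0 : Fin 3) 1 ≤ Finsupp.single (1 : Fin 3) 1) ∧
    ¬ IsCGB L m3 (I K) {g K, h K} := by
  let v : Fin 2 → L := fun _ => 1
  have hv : ∀ i, ((MvPolynomial.aeval v : MvPolynomial (Fin 2) K →ₐ[K] L) :
      MvPolynomial (Fin 2) K →+* L) (MvPolynomial.X i) = 1 := fun i => by
    simp [v]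
  have hsf : paramSpec (L := L) v (f K) = X 1 + X 2 := by
    simp [paramSpec, f, map_add, map_mul, map_sub, map_one, map_C, map_X, hv]
  have hsg : paramSpec (L := L) v (g K) = X 0 + X 2 + 1 := by
    simp [paramSpec, g, map_add, map_mul, map_sub, map_one, map_C, map_X, hv]
  have hsh : paramSpec (L := L) v (h K) = X 0 - X 1 + 1 := by
    simp [paramSpec, h, map_sub, map_add, map_mul, map_sub, map_one, map_C, map_X, hv]
  have hfI : f K ∈ I K := Ideal.subset_span (by simp)
  have hmem : paramSpec (L := L) v (f K) ∈ (I K).map (paramSpec (L := L) v) :=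
    Ideal.mem_map_of_mem _ hfI
  have hne : paramSpec (L := L) v (f K) ≠ 0 := by
    rw [hsf]
    intro hc
    have := congrArg (MvPolynomial.coeff (Finsupp.single 1 1)) hc
    simp [coeff_X', Finsupp.single_eq_single_iff] at this
  have hdf : mdeg m3 (paramSpec (L := L) v (f K)) = Finsupp.single 1 1 := by
    rw [hsf]; exact mdeg_sf
  have hdg : mdeg m3 (paramSpec (L := L) v (g K)) = Finsupp.single 0 1 := by
    rw [hsg]; exact mdeg_sg
  have hdh : mdeg m3 (paramSpec (L := L) v (h K)) = Finsupp.single 0 1 := by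
    rw [hsh]; exact mdeg_sh
  have hndvd : ¬ (Finsupp.single (0 : Fin 3) 1 ≤ Finsupp.single (1 : Fin 3) 1) := by
    intro hc
    have := hc 0
    simp at this
  refine ⟨hmem, hne, hdf, hdg, hdh, hndvd, ?_⟩
  rintro ⟨-, -, hGB⟩
  obtain ⟨-, hall⟩ := hGB v
  obtain ⟨q, hq, hq0, hle⟩ := hall _ hmem hne
  rw [hdf] at hle
  obtain ⟨p, hp, rfl⟩ := hq
  rcases hp with rfl | rfl
  · rw [hdg] at hle; exact hndvd hle
  · rw [hdh] at hle; exact hndvd hle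
end
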